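/- arXiv:1412.3790 — 2 statements merged into one kernel-verified Lean document; each statement's English description precedes it below -/
import Mathlib

section
/- Let μ ∈ (0,1]. There exist constants c_1 > 0 and r_1 > 0 (depending on μ and d) such that for every x ∈ ℝ^d with 1 - c_1 < |x| < 1 and every measurable symmetric set A ⊂ B_{2r_1}\B_{r_1} (A = -A) with |A| ≥ μ |B_{2r_1}\B_{r_1}|, one has |A ∩ B_{1-c_1}(-x)| ≥ (μ/4)|B_{2r_1}\B_{r_1}|. -/
open MeasureTheory Metric Set

lemma slab_bound (d : ℕ) (hd : 0 < d) (e : EuclideanSpace ℝ (Fin d)) (he : ‖e‖ = 1)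
    (a b R : ℝ) (hab : a ≤ b) (hR : 0 ≤ R) :
    volume {h : EuclideanSpace ℝ (Fin d) | (inner ℝ e h : ℝ) ∈ Ioc a b ∧ ‖h‖ < R} ≤
      ENNReal.ofReal ((b - a) * (2 * R) ^ (d - 1)) := by
  set i0 : Fin d := ⟨0, hd⟩
  set e₀ : EuclideanSpace ℝ (Fin d) := EuclideanSpace.single i0 (1 : ℝ) with he₀
  have he₀n : ‖e₀‖ = ‖e‖ := by
    rw [he, he₀, EuclideanSpace.norm_single, norm_one]
  set g := Submodule.reflection (ℝ ∙ (e₀ - e))ᗮ with hg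
  have hge : g e₀ = e := Submodule.reflection_sub he₀n
  set S := {h : EuclideanSpace ℝ (Fin d) | (inner ℝ e h : ℝ) ∈ Ioc a b ∧ ‖h‖ < R} with hS
  have hSm : MeasurableSet S :=
    ((measurable_const.inner measurable_id) measurableSet_Ioc).inter
      (measurableSet_lt measurable_norm measurable_const)
  have hvol : volume S = volume (⇑g ⁻¹' S) :=
    (g.measurePreserving.measure_preimage hSm.nullMeasurableSet).symm
  have hpre : ⇑g ⁻¹' S ⊆ {h : EuclideanSpace ℝ (Fin d) | h i0 ∈ Ioc a b ∧ ‖h‖ < R} := by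
    intro h hh
    simp only [mem_preimage, hS, mem_setOf_eq] at hh
    rcases hh with ⟨h1, h2⟩
    rw [← hge, g.inner_map_map] at h1
    rw [g.norm_map] at h2
    refine ⟨?_, h2⟩
    rwa [he₀, EuclideanSpace.inner_single_left, map_one, one_mul] at h1
  set f : Fin d → Set ℝ := fun i => if i = i0 then Ioc a b else Ioo (-R) R with hf
  have hsub : {h : EuclideanSpace ℝ (Fin d) | h i0 ∈ Ioc a b ∧ ‖h‖ < R} ⊆
      ⇑(MeasurableEquiv.toLp 2 (Fin d → ℝ)).symm ⁻¹' (Set.pi univ f) := by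
    intro h hh
    rcases hh with ⟨h1, h2⟩
    intro i _
    show h i ∈ if i = i0 then Ioc a b else Ioo (-R) R
    by_cases hi : i = i0
    · rw [if_pos hi, hi]; exact h1
    · rw [if_neg hi]
      have habs : |h i| ≤ ‖h‖ := by
        have := abs_real_inner_le_norm (EuclideanSpace.single i (1 : ℝ)) h
        rwa [EuclideanSpace.inner_single_left, map_one, one_mul,
          EuclideanSpace.norm_single, norm_one, one_mul] at this
      have : |h i| < R := lt_of_le_of_lt habs h2
      exact mem_Ioo.mpr (abs_lt.mp this)
  have hpi : volume (⇑(MeasurableEquiv.toLp 2 (Fin d → ℝ)).symm ⁻¹' (Set.pi univ f)) =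
      ENNReal.ofReal (b - a) * ENNReal.ofReal (2 * R) ^ (d - 1) := by
    rw [(EuclideanSpace.volume_preserving_symm_measurableEquiv_toLp (Fin d)).measure_preimage
      (MeasurableSet.univ_pi (fun i => by
        by_cases hi : i = i0
        · rw [hf]; simp only [hi, if_pos]; exact measurableSet_Ioc
        · rw [hf]; simp only [if_neg hi]; exact measurableSet_Ioo)).nullMeasurableSet]
    rw [volume_pi_pi]
    rw [← Finset.mul_prod_erase Finset.univ _ (Finset.mem_univ i0)]
    have h1 : volume (f i0) = ENNReal.ofReal (b - a) := by
      rw [hf]; simp only [if_pos rfl]; exact Real.volume_Ioc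
    have h2 : ∀ i ∈ Finset.univ.erase i0, volume (f i) = ENNReal.ofReal (2 * R) := by
      intro i hi
      rw [hf]; simp only [if_neg (Finset.mem_erase.mp hi).1]
      rw [Real.volume_Ioo]; congr 1; ring
    rw [Finset.prod_congr rfl h2, Finset.prod_const, h1,
      Finset.card_erase_of_mem (Finset.mem_univ i0), Finset.card_univ, Fintype.card_fin]
  calc volume S = volume (⇑g ⁻¹' S) := hvol
    _ ≤ volume (⇑(MeasurableEquiv.toLp 2 (Fin d → ℝ)).symm ⁻¹' (Set.pi univ f)) :=
        measure_mono (hpre.trans hsub)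
    _ = ENNReal.ofReal (b - a) * ENNReal.ofReal (2 * R) ^ (d - 1) := hpi
    _ = ENNReal.ofReal ((b - a) * (2 * R) ^ (d - 1)) := by
        rw [ENNReal.ofReal_mul (show (0:ℝ) ≤ b - a by linarith),
          ENNReal.ofReal_pow (show (0:ℝ) ≤ 2 * R by linarith)]


set_option maxHeartbeats 1000000 in
/-- There are `c₁, r₁ > 0` (depending on `μ` and `d`) so that every symmetric subset `A`
of the ring `B_{2r₁} \ B_{r₁}` of measure at least `μ` times the ring meets the ball
`B_{1-c₁}(-x)` in measure at least `(μ/4)` times the ring, whenever `1 - c₁ < |x| < 1`. -/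
theorem symmetric_set_hits_ball (d : ℕ) (hd : 0 < d) (μ : ℝ) (hμ : 0 < μ) (hμ1 : μ ≤ 1) :
    ∃ c₁ r₁ : ℝ, 0 < c₁ ∧ 0 < r₁ ∧
      ∀ x : EuclideanSpace ℝ (Fin d), 1 - c₁ < ‖x‖ → ‖x‖ < 1 →
      ∀ A : Set (EuclideanSpace ℝ (Fin d)), MeasurableSet A →
        A ⊆ ball (0 : EuclideanSpace ℝ (Fin d)) (2 * r₁) \ ball 0 r₁ →
        (∀ h, h ∈ A ↔ -h ∈ A) →
        ENNReal.ofReal μ * volume (ball (0 : EuclideanSpace ℝ (Fin d)) (2 * r₁) \ ball 0 r₁)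
          ≤ volume A →
        ENNReal.ofReal (μ / 4) *
            volume (ball (0 : EuclideanSpace ℝ (Fin d)) (2 * r₁) \ ball 0 r₁) ≤
          volume (A ∩ ball (-x) (1 - c₁)) := by
  haveI : Nonempty (Fin d) := ⟨⟨0, hd⟩⟩
  -- an opaque constant `ω` giving the volume of balls
  obtain ⟨ω, hω, hball⟩ : ∃ ω : ℝ, 0 < ω ∧ ∀ s : ℝ, 0 ≤ s →
      volume (ball (0 : EuclideanSpace ℝ (Fin d)) s) = ENNReal.ofReal (s ^ d * ω) := by
    refine ⟨Real.sqrt Real.pi ^ d / Real.Gamma (d / 2 + 1), ?_, ?_⟩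
    · apply div_pos (pow_pos (Real.sqrt_pos.mpr Real.pi_pos) d)
      exact Real.Gamma_pos_of_pos (by positivity)
    · intro s hs
      rw [EuclideanSpace.volume_ball, Fintype.card_fin,
        ENNReal.ofReal_mul (by positivity), ENNReal.ofReal_pow hs]
  have h2d : (0:ℝ) < 2 ^ d - 1 := by
    have : (1:ℝ) < 2 ^ d := one_lt_pow₀ (by norm_num) (by omega)
    linarith
  -- an opaque constant κ
  obtain ⟨κ, hκ, hκeq⟩ : ∃ κ : ℝ, 0 < κ ∧
      2 * κ * 4 ^ (d - 1) = μ / 4 * ((2 ^ d - 1) * ω) := by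
    refine ⟨μ / 8 * ((2 ^ d - 1) * ω) / 4 ^ (d - 1), ?_, ?_⟩
    · exact div_pos (mul_pos (by positivity) (mul_pos h2d hω)) (by positivity)
    · field_simp
      ring
  obtain ⟨r₁, hr₁, hr₁eq⟩ : ∃ r₁ : ℝ, 0 < r₁ ∧ r₁ = κ / 4 := ⟨κ / 4, by positivity, rfl⟩
  obtain ⟨T', hT', hT'eq⟩ : ∃ T' : ℝ, 0 < T' ∧ T' = κ * r₁ := ⟨κ * r₁, by positivity, rfl⟩
  obtain ⟨c₁, hc₁, hc₁half, hc₁κ⟩ : ∃ c₁ : ℝ, 0 < c₁ ∧ c₁ ≤ 1 / 2 ∧ c₁ ≤ κ * r₁ / 2 :=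
    ⟨min (κ * r₁ / 2) (1 / 2), lt_min (by positivity) (by norm_num), min_le_right _ _,
      min_le_left _ _⟩
  refine ⟨c₁, r₁, hc₁, hr₁, ?_⟩
  intro x hx1 hx2 A hAm hAsub hAsym hAvol
  have hxnorm : (1:ℝ) / 2 < ‖x‖ := by linarith
  have hxpos : (0:ℝ) < ‖x‖ := by linarith
  have hxne : x ≠ 0 := by
    intro h; rw [h, norm_zero] at hxpos; linarith
  set e : EuclideanSpace ℝ (Fin d) := ‖x‖⁻¹ • x with hedef
  have he : ‖e‖ = 1 := norm_smul_inv_norm hxne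
  -- ring volume
  set V := volume (ball (0 : EuclideanSpace ℝ (Fin d)) (2 * r₁) \ ball 0 r₁) with hVdef
  have hV : V = ENNReal.ofReal ((2 ^ d - 1) * r₁ ^ d * ω) := by
    rw [hVdef, measure_diff (ball_subset_ball (by linarith)) measurableSet_ball.nullMeasurableSet
      measure_ball_lt_top.ne, hball _ (by positivity), hball _ (by positivity),
      ← ENNReal.ofReal_sub _ (by positivity)]
    congr 1
    ring
  have hVfin : V ≠ ⊤ := by rw [hV]; exact ENNReal.ofReal_ne_top
  -- the half-space and the deep half-space
  set N : Set (EuclideanSpace ℝ (Fin d)) := {h | (inner ℝ x h : ℝ) ≤ 0} with hNdef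
  set P : Set (EuclideanSpace ℝ (Fin d)) := {h | (0:ℝ) ≤ inner ℝ x h} with hPdef
  set H : Set (EuclideanSpace ℝ (Fin d)) := {h | (inner ℝ x h : ℝ) ≤ -T'} with hHdef
  have hNm : MeasurableSet N := measurableSet_le (measurable_const.inner measurable_id)
    measurable_const
  -- symmetry: volume (A ∩ P) = volume (A ∩ N)
  have hsymvol : volume (A ∩ P) = volume (A ∩ N) := by
    have hpre : (fun h : EuclideanSpace ℝ (Fin d) => -h) ⁻¹' (A ∩ N) = A ∩ P := by
      ext h
      simp only [mem_preimage, mem_inter_iff, hNdef, hPdef, mem_setOf_eq, inner_neg_right]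
      constructor
      · rintro ⟨h1, h2⟩
        exact ⟨(hAsym h).mpr h1, by linarith⟩
      · rintro ⟨h1, h2⟩
        exact ⟨(hAsym h).mp h1, by linarith⟩
    rw [← hpre, (Measure.measurePreserving_neg volume).measure_preimage
      ((hAm.inter hNm).nullMeasurableSet)]
  -- A covered by the two half-spaces
  have hAcov : volume A ≤ 2 * volume (A ∩ N) := by
    have hsub : A ⊆ (A ∩ N) ∪ (A ∩ P) := by
      intro h hh
      rcases le_or_gt (inner ℝ x h : ℝ) 0 with hle | hlt
      · exact Or.inl ⟨hh, hle⟩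
      · exact Or.inr ⟨hh, le_of_lt hlt⟩
    calc volume A ≤ volume ((A ∩ N) ∪ (A ∩ P)) := measure_mono hsub
      _ ≤ volume (A ∩ N) + volume (A ∩ P) := measure_union_le _ _
      _ = 2 * volume (A ∩ N) := by rw [hsymvol, two_mul]
  -- slab bound
  set Sl : Set (EuclideanSpace ℝ (Fin d)) :=
    {h | (inner ℝ e h : ℝ) ∈ Ioc (-(T' / ‖x‖)) 0 ∧ ‖h‖ < 2 * r₁} with hSldef
  have hslab : volume Sl ≤ ENNReal.ofReal (μ / 4) * V := by
    have h1 : volume Sl ≤ ENNReal.ofReal ((0 - -(T' / ‖x‖)) * (2 * (2 * r₁)) ^ (d - 1)) :=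
      slab_bound d hd e he _ 0 (2 * r₁) (neg_nonpos.mpr (by positivity)) (by positivity)
    refine h1.trans ?_
    rw [hV, ← ENNReal.ofReal_mul (by positivity)]
    apply ENNReal.ofReal_le_ofReal
    have hw : 0 - -(T' / ‖x‖) ≤ 2 * T' := by
      rw [zero_sub, neg_neg, div_le_iff₀ hxpos]
      nlinarith
    have hpow : (0:ℝ) < (2 * (2 * r₁)) ^ (d - 1) := by positivity
    calc (0 - -(T' / ‖x‖)) * (2 * (2 * r₁)) ^ (d - 1)
        ≤ (2 * T') * (2 * (2 * r₁)) ^ (d - 1) :=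
          mul_le_mul_of_nonneg_right hw (le_of_lt hpow)
      _ = μ / 4 * ((2 ^ d - 1) * r₁ ^ d * ω) := by
          have h4 : (2 * (2 * r₁ : ℝ)) ^ (d - 1) = 4 ^ (d - 1) * r₁ ^ (d - 1) := by
            rw [← mul_pow]; ring_nf
          have hr : r₁ ^ d = r₁ * r₁ ^ (d - 1) := by
            rw [← pow_succ', Nat.sub_add_cancel hd]
          rw [h4, hT'eq, hr]
          linear_combination (r₁ * r₁ ^ (d - 1)) * hκeq
  -- A ∩ N covered by deep half-space and slab
  have hANcov : volume (A ∩ N) ≤ volume (A ∩ H) + ENNReal.ofReal (μ / 4) * V := by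
    have hsub : A ∩ N ⊆ (A ∩ H) ∪ Sl := by
      rintro h ⟨hhA, hhN⟩
      rcases le_or_gt (inner ℝ x h : ℝ) (-T') with hle | hgt
      · exact Or.inl ⟨hhA, hle⟩
      · right
        have hhball : ‖h‖ < 2 * r₁ := by
          have := (hAsub hhA).1
          rwa [mem_ball_zero_iff] at this
        refine ⟨⟨?_, ?_⟩, hhball⟩
        · rw [hedef, real_inner_smul_left, neg_lt, ← mul_neg, div_eq_inv_mul]
          have hinv : (0:ℝ) < ‖x‖⁻¹ := by positivity
          apply mul_lt_mul_of_pos_left _ hinv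
          linarith
        · rw [hedef, real_inner_smul_left]
          exact mul_nonpos_of_nonneg_of_nonpos (by positivity) hhN
    calc volume (A ∩ N) ≤ volume ((A ∩ H) ∪ Sl) := measure_mono hsub
      _ ≤ volume (A ∩ H) + volume Sl := measure_union_le _ _
      _ ≤ volume (A ∩ H) + ENNReal.ofReal (μ / 4) * V := add_le_add_right hslab _
  -- deep half-space is inside the ball
  have hHball : A ∩ H ⊆ A ∩ ball (-x) (1 - c₁) := by
    rintro h ⟨hhA, hhH⟩
    refine ⟨hhA, ?_⟩
    have hhball : ‖h‖ < 2 * r₁ := by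
      have := (hAsub hhA).1
      rwa [mem_ball_zero_iff] at this
    rw [mem_ball, dist_eq_norm, sub_neg_eq_add]
    have hsq : ‖h + x‖ ^ 2 = ‖h‖ ^ 2 + 2 * (inner ℝ h x : ℝ) + ‖x‖ ^ 2 := norm_add_sq_real h x
    rw [real_inner_comm] at hsq
    have hih : (inner ℝ x h : ℝ) ≤ -T' := hhH
    have hT'val : T' = κ ^ 2 / 4 := by rw [hT'eq, hr₁eq]; ring
    have hc₁' : c₁ ≤ κ ^ 2 / 8 := by
      rw [hr₁eq] at hc₁κ; nlinarith
    have hnn : 0 ≤ ‖h + x‖ := norm_nonneg _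
    have hhnn : 0 ≤ ‖h‖ := norm_nonneg _
    have hx2' : ‖x‖ ^ 2 < 1 := by nlinarith [hx2, hxpos]
    have hh2 : ‖h‖ ^ 2 < 4 * r₁ ^ 2 := by nlinarith [hhball, hhnn]
    have hb : ‖h + x‖ ^ 2 < 4 * r₁ ^ 2 - 2 * T' + 1 := by linarith [hsq, hih, hh2, hx2']
    have hc : 4 * r₁ ^ 2 - 2 * T' + 1 ≤ (1 - c₁) ^ 2 := by
      rw [hr₁eq, hT'val]
      nlinarith [hc₁', sq_nonneg c₁]
    have hd2 : ‖h + x‖ ^ 2 < (1 - c₁) ^ 2 := lt_of_lt_of_le hb hc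
    nlinarith [hd2, hnn, hc₁half]
  -- put it together
  set W := ENNReal.ofReal (μ / 4) * V with hWdef
  have hkey : ENNReal.ofReal μ * V ≤ 2 * volume (A ∩ H) + 2 * W := by
    calc ENNReal.ofReal μ * V ≤ volume A := hAvol
      _ ≤ 2 * volume (A ∩ N) := hAcov
      _ ≤ 2 * (volume (A ∩ H) + W) := mul_le_mul_right hANcov 2
      _ = 2 * volume (A ∩ H) + 2 * W := by ring
  have hμ4 : ENNReal.ofReal μ = 4 * ENNReal.ofReal (μ / 4) := by
    rw [← ENNReal.ofReal_ofNat, ← ENNReal.ofReal_mul (by norm_num)]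
    congr 1
    ring
  have hWfin : W ≠ ⊤ := ENNReal.mul_ne_top ENNReal.ofReal_ne_top hVfin
  have hkey2 : 2 * W + 2 * W ≤ 2 * volume (A ∩ H) + 2 * W := by
    calc 2 * W + 2 * W = 4 * W := by ring
      _ = ENNReal.ofReal μ * V := by rw [hμ4, hWdef]; ring
      _ ≤ 2 * volume (A ∩ H) + 2 * W := hkey
  have hkey3 : 2 * W ≤ 2 * volume (A ∩ H) :=
    ENNReal.le_of_add_le_add_right (ENNReal.mul_ne_top (by norm_num) hWfin) hkey2
  have hkey4 : W ≤ volume (A ∩ H) :=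
    (ENNReal.mul_le_mul_iff_right (by norm_num) (by norm_num)).mp hkey3
  exact hkey4.trans (measure_mono hHball)
end

section
/- (One-dimensional stacked covering lemma) Let m > 0 and let (a_k)_{k=1}^N and (h_k)_{k=1}^N be real sequences with h_k > 0 (N finite or infinite). Then the Lebesgue measure satisfies |⋃_{k=1}^N (a_k, a_k + (m+1) h_k)| ≤ ((m+1)/m) |⋃_{k=1}^N (a_k + h_k, a_k + (m+1) h_k)|. -/
open MeasureTheory Set

/-- Finite version of the stacked covering lemma, proved by strong induction
on the finite index set. -/
lemma stacked_intervals_measure_finset (m : ℝ) (hm : 0 < m)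
    (a h : ℕ → ℝ) (hh : ∀ k, 0 < h k) (F : Finset ℕ) :
    volume (⋃ k ∈ F, Ioo (a k) (a k + (m + 1) * h k)) ≤
      ENNReal.ofReal ((m + 1) / m) *
        volume (⋃ k ∈ F, Ioo (a k + h k) (a k + (m + 1) * h k)) := by
  classical
  induction F using Finset.strongInduction with
  | _ F ih =>
  rcases F.eq_empty_or_nonempty with rfl | hne
  · simp
  set b : ℕ → ℝ := fun k => a k + (m + 1) * h k with hbdef
  obtain ⟨k₀, hk₀F, hmax⟩ := F.exists_max_image b hne
  have hm1 : (0:ℝ) < m + 1 := by linarith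
  have hak₀ : a k₀ < b k₀ := by
    have := hh k₀; simp only [hbdef]; nlinarith
  -- U' : union over the other intervals
  set U' : Set ℝ := ⋃ k ∈ F.erase k₀, Ioo (a k) (b k) with hU'def
  have hU'open : IsOpen U' := isOpen_biUnion (fun k _ => isOpen_Ioo)
  set T : Set ℝ := Ici (a k₀) ∩ U'ᶜ with hTdef
  have hTclosed : IsClosed T := isClosed_Ici.inter hU'open.isClosed_compl
  have hbT : b k₀ ∈ T := by
    constructor
    · exact le_of_lt hak₀
    · intro hmem
      simp only [hU'def, mem_iUnion] at hmem
      obtain ⟨k, hk, hxk⟩ := hmem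
      exact absurd (hmax k (Finset.mem_of_mem_erase hk)) (not_le.mpr hxk.2)
  have hTbdd : BddBelow T := ⟨a k₀, fun x hx => hx.1⟩
  set d : ℝ := sInf T with hddef
  have hdT : d ∈ T := hTclosed.csInf_mem ⟨_, hbT⟩ hTbdd
  have had : a k₀ ≤ d := hdT.1
  have hdb : d ≤ b k₀ := csInf_le hTbdd hbT
  have hU'mem : ∀ x, a k₀ ≤ x → x < d → x ∈ U' := by
    intro x h1 h2
    by_contra hx
    exact absurd (csInf_le hTbdd ⟨h1, hx⟩) (not_le.mpr h2)
  set B : Finset ℕ := (F.erase k₀).filter (fun k => b k ≤ d) with hBdef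
  have hBsub : B ⊆ F := (Finset.filter_subset _ _).trans (F.erase_subset k₀)
  have hBss : B ⊂ F := by
    rw [Finset.ssubset_iff_of_subset hBsub]
    refine ⟨k₀, hk₀F, ?_⟩
    simp [hBdef]
  -- points of U' below d belong to the B-union
  have hbelow : ∀ x ∈ U', x < d → x ∈ ⋃ k ∈ B, Ioo (a k) (b k) := by
    intro x hx hxd
    simp only [hU'def, mem_iUnion, exists_prop] at hx
    obtain ⟨j, hj, hxj⟩ := hx
    by_cases hbj : b j ≤ d
    · exact mem_iUnion₂.mpr ⟨j, Finset.mem_filter.mpr ⟨hj, hbj⟩, hxj⟩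
    · -- then d ∉ Ioo (a j) (b j) forces d ≤ a j, contradicting x < d < b j
      exfalso
      have hdnot : d ∉ Ioo (a j) (b j) := by
        intro hmem
        exact hdT.2 (mem_iUnion₂.mpr ⟨j, hj, hmem⟩)
      have : d ≤ a j := by
        by_contra hcon
        exact hdnot ⟨not_le.mp hcon, not_le.mp hbj⟩
      linarith [hxj.1]
  -- covering claim
  have hcov : (⋃ k ∈ F, Ioo (a k) (b k)) ⊆ (⋃ k ∈ B, Ioo (a k) (b k)) ∪ Ico d (b k₀) := by
    intro x hx
    simp only [mem_iUnion, exists_prop] at hx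
    obtain ⟨k, hkF, hxk⟩ := hx
    rcases lt_or_ge x d with hxd | hxd
    · left
      by_cases hk : k = k₀
      · subst hk
        exact hbelow x (hU'mem x (le_of_lt hxk.1) hxd) hxd
      · exact hbelow x (mem_iUnion₂.mpr ⟨k, Finset.mem_erase.mpr ⟨hk, hkF⟩, hxk⟩) hxd
    · right
      exact ⟨hxd, lt_of_lt_of_le hxk.2 (hmax k hkF)⟩
  -- the right-hand piece of the maximal interval beyond d
  set X : Set ℝ := Ioo (max (a k₀ + h k₀) d) (b k₀) with hXdef
  have hXsub : X ⊆ ⋃ k ∈ F, Ioo (a k + h k) (b k) := by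
    intro x hx
    exact mem_iUnion₂.mpr ⟨k₀, hk₀F, ⟨lt_of_le_of_lt (le_max_left _ _) hx.1, hx.2⟩⟩
  have hXvol : volume X = ENNReal.ofReal (min (m * h k₀) (b k₀ - d)) := by
    rw [hXdef, Real.volume_Ioo]
    congr 1
    rcases le_total (a k₀ + h k₀) d with hcase | hcase
    · rw [max_eq_right hcase, min_eq_right]
      simp only [hbdef]; nlinarith [hh k₀]
    · rw [max_eq_left hcase, min_eq_left]
      · simp only [hbdef]; ring
      · simp only [hbdef]; nlinarith [hh k₀]
  -- B-union of right pieces is disjoint from X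
  have hdisj : Disjoint (⋃ k ∈ B, Ioo (a k + h k) (b k)) X := by
    rw [Set.disjoint_left]
    intro x hx hxX
    simp only [mem_iUnion, exists_prop] at hx
    obtain ⟨j, hj, hxj⟩ := hx
    have hbj : b j ≤ d := (Finset.mem_filter.mp hj).2
    have : x < d := lt_of_lt_of_le hxj.2 hbj
    have : d ≤ x := le_trans (le_max_right _ _) (le_of_lt hxX.1)
    linarith
  have hmeasB : MeasurableSet (⋃ k ∈ B, Ioo (a k + h k) (b k)) :=
    MeasurableSet.biUnion (B : Set ℕ).to_countable (fun k _ => measurableSet_Ioo)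
  -- key real inequality
  have hkey : ENNReal.ofReal (b k₀ - d) ≤
      ENNReal.ofReal ((m + 1) / m) * ENNReal.ofReal (min (m * h k₀) (b k₀ - d)) := by
    rw [← ENNReal.ofReal_mul (by positivity)]
    apply ENNReal.ofReal_le_ofReal
    rcases le_total (m * h k₀) (b k₀ - d) with hcase | hcase
    · rw [min_eq_left hcase]
      have : (m + 1) / m * (m * h k₀) = (m + 1) * h k₀ := by
        field_simp
      rw [this]
      have : b k₀ - a k₀ = (m + 1) * h k₀ := by simp only [hbdef]; ring
      linarith
    · rw [min_eq_right hcase]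
      have h1 : (1:ℝ) ≤ (m + 1) / m := by
        rw [le_div_iff₀ hm]; linarith
      exact le_mul_of_one_le_left (sub_nonneg.mpr hdb) h1
  calc volume (⋃ k ∈ F, Ioo (a k) (b k))
      ≤ volume ((⋃ k ∈ B, Ioo (a k) (b k)) ∪ Ico d (b k₀)) := measure_mono hcov
    _ ≤ volume (⋃ k ∈ B, Ioo (a k) (b k)) + volume (Ico d (b k₀)) := measure_union_le _ _
    _ = volume (⋃ k ∈ B, Ioo (a k) (b k)) + ENNReal.ofReal (b k₀ - d) := by
        rw [Real.volume_Ico]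
    _ ≤ ENNReal.ofReal ((m + 1) / m) * volume (⋃ k ∈ B, Ioo (a k + h k) (b k)) +
        ENNReal.ofReal ((m + 1) / m) * ENNReal.ofReal (min (m * h k₀) (b k₀ - d)) :=
        add_le_add (ih B hBss) hkey
    _ = ENNReal.ofReal ((m + 1) / m) *
        (volume (⋃ k ∈ B, Ioo (a k + h k) (b k)) + volume X) := by
        rw [hXvol, mul_add]
    _ = ENNReal.ofReal ((m + 1) / m) *
        volume ((⋃ k ∈ B, Ioo (a k + h k) (b k)) ∪ X) := by
        rw [measure_union hdisj measurableSet_Ioo]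
    _ ≤ ENNReal.ofReal ((m + 1) / m) * volume (⋃ k ∈ F, Ioo (a k + h k) (b k)) := by
        apply mul_le_mul_right
        apply measure_mono
        apply union_subset _ hXsub
        exact iUnion₂_mono' (fun k hk => ⟨k, hBsub hk, subset_rfl⟩)

/-- One-dimensional stacked covering lemma: the union of the full intervals
`(a_k, a_k + (m+1)h_k)` has measure at most `(m+1)/m` times the measure of the union
of the right-hand portions `(a_k + h_k, a_k + (m+1)h_k)`. -/
theorem stacked_intervals_measure (m : ℝ) (hm : 0 < m)
    (a h : ℕ → ℝ) (hh : ∀ k, 0 < h k) (S : Set ℕ) :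
    volume (⋃ k ∈ S, Ioo (a k) (a k + (m + 1) * h k)) ≤
      ENNReal.ofReal ((m + 1) / m) *
        volume (⋃ k ∈ S, Ioo (a k + h k) (a k + (m + 1) * h k)) := by
  classical
  set G : ℕ → Set ℝ :=
    fun n => ⋃ k ∈ (Finset.range n).filter (· ∈ S), Ioo (a k) (a k + (m + 1) * h k) with hGdef
  have hGmono : Monotone G := by
    intro i j hij
    apply iUnion₂_mono'
    intro k hk
    refine ⟨k, ?_, subset_rfl⟩
    simp only [Finset.mem_filter, Finset.mem_range] at hk ⊢
    exact ⟨lt_of_lt_of_le hk.1 hij, hk.2⟩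
  have hUeq : (⋃ k ∈ S, Ioo (a k) (a k + (m + 1) * h k)) = ⋃ n, G n := by
    ext x
    simp only [hGdef, mem_iUnion, exists_prop, Finset.mem_filter, Finset.mem_range]
    constructor
    · rintro ⟨k, hk, hx⟩
      exact ⟨k + 1, k, ⟨Nat.lt_succ_self k, hk⟩, hx⟩
    · rintro ⟨n, k, ⟨_, hk⟩, hx⟩
      exact ⟨k, hk, hx⟩
  rw [hUeq, (hGmono.directed_le).measure_iUnion]
  apply iSup_le
  intro n
  calc volume (G n)
      ≤ ENNReal.ofReal ((m + 1) / m) *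
        volume (⋃ k ∈ (Finset.range n).filter (· ∈ S), Ioo (a k + h k) (a k + (m + 1) * h k)) :=
        stacked_intervals_measure_finset m hm a h hh _
    _ ≤ ENNReal.ofReal ((m + 1) / m) *
        volume (⋃ k ∈ S, Ioo (a k + h k) (a k + (m + 1) * h k)) := by
        apply mul_le_mul_right
        apply measure_mono
        apply iUnion₂_mono'
        intro k hk
        exact ⟨k, (Finset.mem_filter.mp hk).2, subset_rfl⟩
end
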